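/- arXiv:1605.03372 — 4 statements merged into one kernel-verified Lean document; each statement's English description precedes it below -/
import Mathlib

section
/- Let A = {(x,y) ∈ ℝ² : (r−δ)² ≤ x²+y² ≤ (r+δ)²} with 0 < δ < r. If F : A → ℝ is constant on every circle of radius r contained in A, then F is constant on A. -/
/-!
Identify the plane with `ℂ`. A point `p` of the annulus lies on the circle of radius `r` centred
at `(1 - r/‖p‖) p`, a centre of norm `|‖p‖ - r| ≤ δ`, so this circle stays in the annulus.
Two such centres are at distance at most `2δ < 2r`, so the circles through `p` and `q` meet in
some `z`, and `F p = F z = F q`.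
-/

open Set

lemma norm_mem_Icc_of_norm_sub_eq {E : Type*} [SeminormedAddCommGroup E] {p c : E} {r δ : ℝ}
    (hc : ‖c‖ ≤ δ) (hp : ‖p - c‖ = r) : ‖p‖ ∈ Icc (r - δ) (r + δ) := by
  have h₁ := norm_sub_norm_le p c
  have h₂ := norm_sub_le p c
  constructor <;> linarith

lemma exists_norm_eq_abs_sub_and_norm_sub_eq {E : Type*} [NormedAddCommGroup E] [NormedSpace ℝ E]
    {p : E} (hp : p ≠ 0) {r : ℝ} (hr : 0 ≤ r) :
    ∃ c : E, ‖c‖ = |‖p‖ - r| ∧ ‖p - c‖ = r := by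
  have hp' : 0 < ‖p‖ := norm_pos_iff.mpr hp
  refine ⟨(1 - r / ‖p‖) • p, ?_, ?_⟩
  · rw [norm_smul, Real.norm_eq_abs, ← abs_of_pos hp', ← abs_mul, abs_of_pos hp']
    congr 1
    field_simp
  · rw [sub_smul, one_smul, sub_sub_cancel, norm_smul, Real.norm_eq_abs, abs_div,
      abs_of_nonneg hr, abs_norm, div_mul_cancel₀ _ hp'.ne']

lemma Complex.norm_mul_add_mul_I (w : ℂ) (s t : ℝ) :
    ‖w * (s + t * I)‖ = ‖w‖ * √(s ^ 2 + t ^ 2) := by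
  rw [norm_mul, Complex.norm_add_mul_I]

lemma Complex.exists_norm_sub_eq_and_norm_sub_eq {c c' : ℂ} {r : ℝ} (h : ‖c' - c‖ ≤ 2 * r) :
    ∃ z : ℂ, ‖z - c‖ = r ∧ ‖z - c'‖ = r := by
  rcases eq_or_ne c' c with rfl | hcc
  · have hr : 0 ≤ r := by simpa using h
    exact ⟨c' + r, by simp [abs_of_nonneg hr], by simp [abs_of_nonneg hr]⟩
  set w := c' - c
  have hw : 0 < ‖w‖ := norm_pos_iff.mpr (sub_ne_zero.mpr hcc)
  have hr : 0 ≤ r := by linarith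
  -- the intersection point lies on the perpendicular bisector, at height `t ‖w‖` over the midpoint
  set t := √(r ^ 2 - ‖w‖ ^ 2 / 4) / ‖w‖
  have norm_eq (s : ℝ) (hs : s ^ 2 = 1 / 4) : ‖w‖ * √(s ^ 2 + t ^ 2) = r := by
    have ht : ‖w‖ ^ 2 * t ^ 2 = r ^ 2 - ‖w‖ ^ 2 / 4 := by
      rw [div_pow, mul_div_cancel₀ _ (by positivity), Real.sq_sqrt (by nlinarith [norm_nonneg w])]
    rw [← Real.sqrt_sq hw.le, ← Real.sqrt_mul (sq_nonneg _), ← Real.sqrt_sq hr, mul_add, ht, hs]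
    ring_nf
  refine ⟨c + w * ((1 / 2 : ℝ) + t * I), ?_, ?_⟩
  · rw [add_sub_cancel_left, norm_mul_add_mul_I, norm_eq _ (by norm_num)]
  · have : c + w * ((1 / 2 : ℝ) + t * I) - c' = w * ((-1 / 2 : ℝ) + t * I) := by
      simp only [w]; push_cast; ring
    rw [this, norm_mul_add_mul_I, norm_eq _ (by norm_num)]

theorem Complex.apply_eq_apply_of_const_on_circles {β : Type*} {r δ : ℝ} (hδr : δ < r)
    {F : ℂ → β} (hF : ∀ c : ℂ, ‖c‖ ≤ δ → ∀ p q : ℂ, ‖p - c‖ = r → ‖q - c‖ = r → F p = F q)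
    {p q : ℂ} (hp : ‖p‖ ∈ Icc (r - δ) (r + δ)) (hq : ‖q‖ ∈ Icc (r - δ) (r + δ)) :
    F p = F q := by
  have hr : 0 ≤ r := by linarith [hp.1, hp.2]
  have exists_center (x : ℂ) (hx : ‖x‖ ∈ Icc (r - δ) (r + δ)) : ∃ c : ℂ, ‖c‖ ≤ δ ∧ ‖x - c‖ = r := by
    have hx0 : x ≠ 0 := norm_pos_iff.mp (by linarith [hx.1])
    obtain ⟨c, hc, hxc⟩ := exists_norm_eq_abs_sub_and_norm_sub_eq hx0 hr
    exact ⟨c, hc ▸ abs_sub_le_iff.mpr ⟨by linarith [hx.2], by linarith [hx.1]⟩, hxc⟩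
  obtain ⟨cp, hcp, hpcp⟩ := exists_center p hp
  obtain ⟨cq, hcq, hqcq⟩ := exists_center q hq
  obtain ⟨z, hzp, hzq⟩ := exists_norm_sub_eq_and_norm_sub_eq (c := cp) (c' := cq) (r := r) <| by
    linarith [norm_sub_le cq cp]
  exact (hF cp hcp p z hpcp hzp).trans (hF cq hcq z q hzq hqcq)

lemma Complex.norm_mk_sub_mk_eq_iff {a b c d r : ℝ} (hr : 0 ≤ r) :
    ‖(⟨a, b⟩ : ℂ) - ⟨c, d⟩‖ = r ↔ (a - c) ^ 2 + (b - d) ^ 2 = r ^ 2 := by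
  rw [← sq_eq_sq₀ (norm_nonneg _) hr, Complex.sq_norm, Complex.normSq_apply]
  simp only [sub_re, sub_im]
  ring_nf

lemma Complex.norm_mk_mem_Icc_iff {a b s t : ℝ} (hs : 0 ≤ s) (ht : 0 ≤ t) :
    ‖(⟨a, b⟩ : ℂ)‖ ∈ Icc s t ↔ s ^ 2 ≤ a ^ 2 + b ^ 2 ∧ a ^ 2 + b ^ 2 ≤ t ^ 2 := by
  rw [mem_Icc, ← sq_le_sq₀ hs (norm_nonneg _), ← sq_le_sq₀ (norm_nonneg _) ht, Complex.sq_norm,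
    Complex.normSq_mk, ← sq, ← sq]

/-- If `F` is constant on every circle of radius `r` contained in the
annulus `A = {(x,y) : (r-δ)² ≤ x²+y² ≤ (r+δ)²}` (with `0 < δ < r`), then `F` is
constant on `A`. -/
theorem stmt_0 (r δ : ℝ) (hδ : 0 < δ) (hδr : δ < r)
    (A : Set (ℝ × ℝ))
    (hA : A = {p : ℝ × ℝ | (r - δ)^2 ≤ p.1^2 + p.2^2 ∧ p.1^2 + p.2^2 ≤ (r + δ)^2})
    (F : ℝ × ℝ → ℝ)
    (hF : ∀ c : ℝ × ℝ, {p : ℝ × ℝ | (p.1 - c.1)^2 + (p.2 - c.2)^2 = r^2} ⊆ A →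
      ∀ p q : ℝ × ℝ, (p.1 - c.1)^2 + (p.2 - c.2)^2 = r^2 →
        (q.1 - c.1)^2 + (q.2 - c.2)^2 = r^2 → F p = F q) :
    ∀ p ∈ A, ∀ q ∈ A, F p = F q := by
  subst hA
  have hr : 0 ≤ r := by linarith
  have hAnn (x : ℝ × ℝ) := Complex.norm_mk_mem_Icc_iff (a := x.1) (b := x.2)
    (sub_nonneg.mpr hδr.le) (by linarith : 0 ≤ r + δ)
  have hCirc (x c : ℝ × ℝ) := Complex.norm_mk_sub_mk_eq_iff (a := x.1) (b := x.2) (c := c.1)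
    (d := c.2) hr
  intro p hp q hq
  refine Complex.apply_eq_apply_of_const_on_circles (F := fun z ↦ F (z.re, z.im)) hδr
    (fun c hc z w hz hw ↦ ?_) ((hAnn p).mpr hp) ((hAnn q).mpr hq)
  refine hF (c.re, c.im) (fun x hx ↦ (hAnn x).mp ?_) (z.re, z.im) (w.re, w.im)
    ((hCirc _ _).mp hz) ((hCirc _ _).mp hw)
  exact norm_mem_Icc_of_norm_sub_eq hc ((hCirc _ _).mpr hx)
end

section
/- Let F be a smooth function on a domain in ℝ², and let γ be a curve along which ∇F ≠ 0 and along which, for all small ε, F(P + r(I − R_ε)n(P)) = F(P + r(I − R_{−ε})n(P)) where n = ∇F/|∇F| and R_ε is rotation by ε. Then the coefficient of ε³ in the Taylor expansion of the difference yields the identity (F_{xxx}F_y³ − 3F_{xxy}F_y²F_x + 3F_{xyy}F_yF_x² − F_{yyy}F_x³) + 3β(F_x²+F_y²)^{1/2}(F_{xx}F_xF_y + F_{xy}(F_y²−F_x²) − F_{yy}F_xF_y) = 0 along γ, where β = 1/r. -/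
/-- Partial derivative in the first variable. -/
noncomputable def pd1 (F : ℝ → ℝ → ℝ) : ℝ → ℝ → ℝ := fun x y => deriv (fun t => F t y) x

/-- Partial derivative in the second variable. -/
noncomputable def pd2 (F : ℝ → ℝ → ℝ) : ℝ → ℝ → ℝ := fun x y => deriv (fun t => F x t) y

open Function

lemma pd1_eq (F : ℝ → ℝ → ℝ) (hF : ContDiff ℝ (⊤ : ℕ∞) (uncurry F)) (x y : ℝ) :
    pd1 F x y = fderiv ℝ (uncurry F) (x, y) (1, 0) := by
  have h1 : HasDerivAt (fun t : ℝ => ((t, y) : ℝ × ℝ)) (1, 0) x :=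
    HasDerivAt.prodMk (hasDerivAt_id x) (hasDerivAt_const x y)
  have h2 : HasFDerivAt (uncurry F) (fderiv ℝ (uncurry F) (x, y)) (x, y) :=
    (hF.differentiable (by simp) (x, y)).hasFDerivAt
  exact (h2.comp_hasDerivAt x h1).deriv

lemma pd2_eq (F : ℝ → ℝ → ℝ) (hF : ContDiff ℝ (⊤ : ℕ∞) (uncurry F)) (x y : ℝ) :
    pd2 F x y = fderiv ℝ (uncurry F) (x, y) (0, 1) := by
  have h1 : HasDerivAt (fun t : ℝ => ((x, t) : ℝ × ℝ)) (0, 1) y :=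
    HasDerivAt.prodMk (hasDerivAt_const y x) (hasDerivAt_id y)
  have h2 : HasFDerivAt (uncurry F) (fderiv ℝ (uncurry F) (x, y)) (x, y) :=
    (hF.differentiable (by simp) (x, y)).hasFDerivAt
  exact (h2.comp_hasDerivAt y h1).deriv

lemma chain (F : ℝ → ℝ → ℝ) (hF : ContDiff ℝ (⊤ : ℕ∞) (uncurry F))
    {u v : ℝ → ℝ} {u' v' t : ℝ} (hu : HasDerivAt u u' t) (hv : HasDerivAt v v' t) :
    HasDerivAt (fun ε => F (u ε) (v ε))
      (pd1 F (u t) (v t) * u' + pd2 F (u t) (v t) * v') t := by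
  have h2 : HasFDerivAt (uncurry F) (fderiv ℝ (uncurry F) (u t, v t)) (u t, v t) :=
    (hF.differentiable (by simp) _).hasFDerivAt
  have hc : HasDerivAt (fun ε => ((u ε, v ε) : ℝ × ℝ)) (u', v') t := HasDerivAt.prodMk hu hv
  have := h2.comp_hasDerivAt t hc
  refine this.congr_deriv ?_
  rw [pd1_eq F hF, pd2_eq F hF]
  have : ((u', v') : ℝ × ℝ) = u' • (1, 0) + v' • (0, 1) := by simp
  rw [this, map_add, (fderiv ℝ (uncurry F) (u t, v t)).map_smul,
    (fderiv ℝ (uncurry F) (u t, v t)).map_smul]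
  simp [mul_comm]

lemma contDiff_pd1 (F : ℝ → ℝ → ℝ) (hF : ContDiff ℝ (⊤ : ℕ∞) (uncurry F)) :
    ContDiff ℝ (⊤ : ℕ∞) (uncurry (pd1 F)) := by
  have h : uncurry (pd1 F) = fun p : ℝ × ℝ => fderiv ℝ (uncurry F) p (1, 0) := by
    ext p
    exact pd1_eq F hF p.1 p.2
  rw [h]
  exact (ContinuousLinearMap.apply ℝ ℝ ((1:ℝ), (0:ℝ))).contDiff.comp (hF.fderiv_right (by simp))

lemma contDiff_pd2 (F : ℝ → ℝ → ℝ) (hF : ContDiff ℝ (⊤ : ℕ∞) (uncurry F)) :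
    ContDiff ℝ (⊤ : ℕ∞) (uncurry (pd2 F)) := by
  have h : uncurry (pd2 F) = fun p : ℝ × ℝ => fderiv ℝ (uncurry F) p (0, 1) := by
    ext p
    exact pd2_eq F hF p.1 p.2
  rw [h]
  exact (ContinuousLinearMap.apply ℝ ℝ ((0:ℝ), (1:ℝ))).contDiff.comp (hF.fderiv_right (by simp))

lemma fderiv_pd_eval (F : ℝ → ℝ → ℝ) (hF : ContDiff ℝ (⊤ : ℕ∞) (uncurry F)) (x y : ℝ) (w : ℝ × ℝ) :
    HasFDerivAt (fun p : ℝ × ℝ => fderiv ℝ (uncurry F) p w)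
      ((ContinuousLinearMap.apply ℝ ℝ w).comp (fderiv ℝ (fderiv ℝ (uncurry F)) (x, y))) (x, y) := by
  have hd : HasFDerivAt (fderiv ℝ (uncurry F)) (fderiv ℝ (fderiv ℝ (uncurry F)) (x, y)) (x, y) :=
    (((hF.fderiv_right (m := (⊤ : ℕ∞)) (by simp)).differentiable (by simp)) (x, y)).hasFDerivAt
  exact (ContinuousLinearMap.apply ℝ ℝ w).hasFDerivAt.comp (x, y) hd

lemma schwarz (F : ℝ → ℝ → ℝ) (hF : ContDiff ℝ (⊤ : ℕ∞) (uncurry F)) :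
    pd1 (pd2 F) = pd2 (pd1 F) := by
  funext x y
  have hsymm : IsSymmSndFDerivAt ℝ (uncurry F) (x, y) :=
    hF.contDiffAt.isSymmSndFDerivAt (by rw [minSmoothness_of_isRCLikeNormedField]; exact WithTop.coe_le_coe.mpr le_top)
  have e1 : pd1 (pd2 F) x y = fderiv ℝ (fderiv ℝ (uncurry F)) (x, y) (1, 0) (0, 1) := by
    rw [pd1_eq (pd2 F) (contDiff_pd2 F hF) x y]
    have h : uncurry (pd2 F) = fun p : ℝ × ℝ => fderiv ℝ (uncurry F) p (0, 1) := by
      ext p; exact pd2_eq F hF p.1 p.2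
    rw [h, (fderiv_pd_eval F hF x y (0, 1)).fderiv]
    rfl
  have e2 : pd2 (pd1 F) x y = fderiv ℝ (fderiv ℝ (uncurry F)) (x, y) (0, 1) (1, 0) := by
    rw [pd2_eq (pd1 F) (contDiff_pd1 F hF) x y]
    have h : uncurry (pd1 F) = fun p : ℝ × ℝ => fderiv ℝ (uncurry F) p (1, 0) := by
      ext p; exact pd1_eq F hF p.1 p.2
    rw [h, (fderiv_pd_eval F hF x y (1, 0)).fderiv]
    rfl
  rw [e1, e2, hsymm (1, 0) (0, 1)]

lemma hd_congr {f : ℝ → ℝ} {a b t : ℝ} (h : HasDerivAt f a t) (hab : a = b) :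
    HasDerivAt f b t := hab ▸ h

noncomputable def uu (r s x a b : ℝ) : ℝ → ℝ :=
  fun ε => x + r * (a * (1 - Real.cos ε) + b * Real.sin ε) / s
noncomputable def vv (r s y a b : ℝ) : ℝ → ℝ :=
  fun ε => y + r * (b * (1 - Real.cos ε) - a * Real.sin ε) / s
noncomputable def cc1 (r s a b : ℝ) : ℝ → ℝ :=
  fun ε => r * (a * Real.sin ε + b * Real.cos ε) / s
noncomputable def cc2 (r s a b : ℝ) : ℝ → ℝ :=
  fun ε => r * (b * Real.sin ε - a * Real.cos ε) / s

lemma hasDerivAt_uu (r s x a b ε : ℝ) :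
    HasDerivAt (uu r s x a b) (cc1 r s a b ε) ε := by
  have h1 : HasDerivAt (fun ε => a * (1 - Real.cos ε) + b * Real.sin ε)
      (a * Real.sin ε + b * Real.cos ε) ε := by
    have := (((hasDerivAt_const ε (1:ℝ)).sub (Real.hasDerivAt_cos ε)).const_mul a).add
      ((Real.hasDerivAt_sin ε).const_mul b)
    exact hd_congr this (by ring)
  exact ((h1.const_mul r).div_const s).const_add x

lemma hasDerivAt_vv (r s y a b ε : ℝ) :
    HasDerivAt (vv r s y a b) (cc2 r s a b ε) ε := by
  have h1 : HasDerivAt (fun ε => b * (1 - Real.cos ε) - a * Real.sin ε)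
      (b * Real.sin ε - a * Real.cos ε) ε := by
    have := (((hasDerivAt_const ε (1:ℝ)).sub (Real.hasDerivAt_cos ε)).const_mul b).sub
      ((Real.hasDerivAt_sin ε).const_mul a)
    exact hd_congr this (by ring)
  exact ((h1.const_mul r).div_const s).const_add y

lemma hasDerivAt_cc1 (r s a b ε : ℝ) :
    HasDerivAt (cc1 r s a b) (-cc2 r s a b ε) ε := by
  have h1 : HasDerivAt (fun ε => a * Real.sin ε + b * Real.cos ε)
      (a * Real.cos ε - b * Real.sin ε) ε := by
    have := ((Real.hasDerivAt_sin ε).const_mul a).add ((Real.hasDerivAt_cos ε).const_mul b)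
    exact hd_congr this (by ring)
  exact hd_congr ((h1.const_mul r).div_const s) (by unfold cc2; ring)

lemma hasDerivAt_cc2 (r s a b ε : ℝ) :
    HasDerivAt (cc2 r s a b) (cc1 r s a b ε) ε := by
  have h1 : HasDerivAt (fun ε => b * Real.sin ε - a * Real.cos ε)
      (b * Real.cos ε + a * Real.sin ε) ε := by
    have := ((Real.hasDerivAt_sin ε).const_mul b).sub ((Real.hasDerivAt_cos ε).const_mul a)
    exact hd_congr this (by ring)
  exact hd_congr ((h1.const_mul r).div_const s) (by unfold cc1; ring)

lemma even_third (h h1 h2 h3 : ℝ → ℝ)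
    (H1 : ∀ t, HasDerivAt h (h1 t) t)
    (H2 : ∀ t, HasDerivAt h1 (h2 t) t)
    (H3 : ∀ t, HasDerivAt h2 (h3 t) t)
    (ε₀ : ℝ) (hε₀ : 0 < ε₀) (hev : ∀ ε, |ε| < ε₀ → h ε = h (-ε)) :
    h3 0 = 0 := by
  have hball : h =ᶠ[nhds (0:ℝ)] fun ε => h (-ε) := by
    filter_upwards [Metric.ball_mem_nhds (0:ℝ) hε₀] with ε hε
    exact hev ε (by simpa [Real.dist_eq] using hε)
  have d1 : deriv h = h1 := funext fun t => (H1 t).deriv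
  have d1' : deriv (fun ε => h (-ε)) = fun ε => -h1 (-ε) := by
    funext t
    have : HasDerivAt (fun ε : ℝ => h (-ε)) (h1 (-t) * (-1)) t :=
      (H1 (-t)).comp t (hasDerivAt_neg t)
    rw [this.deriv]; ring
  have e1 : h1 =ᶠ[nhds (0:ℝ)] fun ε => -h1 (-ε) := by
    have := hball.deriv
    rwa [d1, d1'] at this
  have d2 : deriv h1 = h2 := funext fun t => (H2 t).deriv
  have d2' : deriv (fun ε => -h1 (-ε)) = fun ε => h2 (-ε) := by
    funext t
    have : HasDerivAt (fun ε : ℝ => -h1 (-ε)) (-(h2 (-t) * (-1))) t :=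
      ((H2 (-t)).comp t (hasDerivAt_neg t)).neg
    rw [this.deriv]; ring
  have e2 : h2 =ᶠ[nhds (0:ℝ)] fun ε => h2 (-ε) := by
    have := e1.deriv
    rwa [d2, d2'] at this
  have d3 : deriv h2 = h3 := funext fun t => (H3 t).deriv
  have d3' : deriv (fun ε => h2 (-ε)) = fun ε => -h3 (-ε) := by
    funext t
    have : HasDerivAt (fun ε : ℝ => h2 (-ε)) (h3 (-t) * (-1)) t :=
      (H3 (-t)).comp t (hasDerivAt_neg t)
    rw [this.deriv]; ring
  have e3 : h3 =ᶠ[nhds (0:ℝ)] fun ε => -h3 (-ε) := by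
    have := e2.deriv
    rwa [d3, d3'] at this
  have := e3.self_of_nhds
  simp at this
  linarith

noncomputable def hh (F : ℝ → ℝ → ℝ) (r s x y a b : ℝ) : ℝ → ℝ :=
  fun ε => F (uu r s x a b ε) (vv r s y a b ε)

noncomputable def hh1 (F : ℝ → ℝ → ℝ) (r s x y a b : ℝ) : ℝ → ℝ :=
  fun ε => pd1 F (uu r s x a b ε) (vv r s y a b ε) * cc1 r s a b ε
    + pd2 F (uu r s x a b ε) (vv r s y a b ε) * cc2 r s a b ε

noncomputable def hh2 (F : ℝ → ℝ → ℝ) (r s x y a b : ℝ) : ℝ → ℝ :=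
  fun ε =>
    (pd1 (pd1 F) (uu r s x a b ε) (vv r s y a b ε) * cc1 r s a b ε
      + pd2 (pd1 F) (uu r s x a b ε) (vv r s y a b ε) * cc2 r s a b ε) * cc1 r s a b ε
    + pd1 F (uu r s x a b ε) (vv r s y a b ε) * -cc2 r s a b ε
    + ((pd1 (pd2 F) (uu r s x a b ε) (vv r s y a b ε) * cc1 r s a b ε
      + pd2 (pd2 F) (uu r s x a b ε) (vv r s y a b ε) * cc2 r s a b ε) * cc2 r s a b ε
      + pd2 F (uu r s x a b ε) (vv r s y a b ε) * cc1 r s a b ε)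

noncomputable def hh3 (F : ℝ → ℝ → ℝ) (r s x y a b : ℝ) : ℝ → ℝ :=
  fun ε =>
    ((pd1 (pd1 (pd1 F)) (uu r s x a b ε) (vv r s y a b ε) * cc1 r s a b ε
        + pd2 (pd1 (pd1 F)) (uu r s x a b ε) (vv r s y a b ε) * cc2 r s a b ε) * cc1 r s a b ε
      + pd1 (pd1 F) (uu r s x a b ε) (vv r s y a b ε) * -cc2 r s a b ε
      + (pd1 (pd2 (pd1 F)) (uu r s x a b ε) (vv r s y a b ε) * cc1 r s a b ε
        + pd2 (pd2 (pd1 F)) (uu r s x a b ε) (vv r s y a b ε) * cc2 r s a b ε) * cc2 r s a b ε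
      + pd2 (pd1 F) (uu r s x a b ε) (vv r s y a b ε) * cc1 r s a b ε) * cc1 r s a b ε
    + (pd1 (pd1 F) (uu r s x a b ε) (vv r s y a b ε) * cc1 r s a b ε
        + pd2 (pd1 F) (uu r s x a b ε) (vv r s y a b ε) * cc2 r s a b ε) * -cc2 r s a b ε
    + ((pd1 (pd1 F) (uu r s x a b ε) (vv r s y a b ε) * cc1 r s a b ε
        + pd2 (pd1 F) (uu r s x a b ε) (vv r s y a b ε) * cc2 r s a b ε) * -cc2 r s a b ε
      + pd1 F (uu r s x a b ε) (vv r s y a b ε) * -cc1 r s a b ε)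
    + (((pd1 (pd1 (pd2 F)) (uu r s x a b ε) (vv r s y a b ε) * cc1 r s a b ε
        + pd2 (pd1 (pd2 F)) (uu r s x a b ε) (vv r s y a b ε) * cc2 r s a b ε) * cc1 r s a b ε
      + pd1 (pd2 F) (uu r s x a b ε) (vv r s y a b ε) * -cc2 r s a b ε
      + (pd1 (pd2 (pd2 F)) (uu r s x a b ε) (vv r s y a b ε) * cc1 r s a b ε
        + pd2 (pd2 (pd2 F)) (uu r s x a b ε) (vv r s y a b ε) * cc2 r s a b ε) * cc2 r s a b ε
      + pd2 (pd2 F) (uu r s x a b ε) (vv r s y a b ε) * cc1 r s a b ε) * cc2 r s a b ε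
      + (pd1 (pd2 F) (uu r s x a b ε) (vv r s y a b ε) * cc1 r s a b ε
        + pd2 (pd2 F) (uu r s x a b ε) (vv r s y a b ε) * cc2 r s a b ε) * cc1 r s a b ε)
    + ((pd1 (pd2 F) (uu r s x a b ε) (vv r s y a b ε) * cc1 r s a b ε
        + pd2 (pd2 F) (uu r s x a b ε) (vv r s y a b ε) * cc2 r s a b ε) * cc1 r s a b ε
      + pd2 F (uu r s x a b ε) (vv r s y a b ε) * -cc2 r s a b ε)

lemma hasDerivAt_hh (F : ℝ → ℝ → ℝ) (hF : ContDiff ℝ (⊤ : ℕ∞) (uncurry F)) (r s x y a b ε : ℝ) :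
    HasDerivAt (hh F r s x y a b) (hh1 F r s x y a b ε) ε :=
  chain F hF (hasDerivAt_uu r s x a b ε) (hasDerivAt_vv r s y a b ε)

lemma hasDerivAt_hh1 (F : ℝ → ℝ → ℝ) (hF : ContDiff ℝ (⊤ : ℕ∞) (uncurry F)) (r s x y a b ε : ℝ) :
    HasDerivAt (hh1 F r s x y a b) (hh2 F r s x y a b ε) ε := by
  have k1 := chain (pd1 F) (contDiff_pd1 F hF) (hasDerivAt_uu r s x a b ε)
    (hasDerivAt_vv r s y a b ε)
  have k2 := chain (pd2 F) (contDiff_pd2 F hF) (hasDerivAt_uu r s x a b ε)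
    (hasDerivAt_vv r s y a b ε)
  exact (k1.mul (hasDerivAt_cc1 r s a b ε)).add (k2.mul (hasDerivAt_cc2 r s a b ε))

lemma hasDerivAt_hh2 (F : ℝ → ℝ → ℝ) (hF : ContDiff ℝ (⊤ : ℕ∞) (uncurry F)) (r s x y a b ε : ℝ) :
    HasDerivAt (hh2 F r s x y a b) (hh3 F r s x y a b ε) ε := by
  have hF1 := contDiff_pd1 F hF
  have hF2 := contDiff_pd2 F hF
  have du := hasDerivAt_uu r s x a b ε
  have dv := hasDerivAt_vv r s y a b ε
  have dc1 := hasDerivAt_cc1 r s a b ε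
  have dc2 := hasDerivAt_cc2 r s a b ε
  have k1 := chain (pd1 F) hF1 du dv
  have k2 := chain (pd2 F) hF2 du dv
  have k11 := chain (pd1 (pd1 F)) (contDiff_pd1 _ hF1) du dv
  have k12 := chain (pd2 (pd1 F)) (contDiff_pd2 _ hF1) du dv
  have k21 := chain (pd1 (pd2 F)) (contDiff_pd1 _ hF2) du dv
  have k22 := chain (pd2 (pd2 F)) (contDiff_pd2 _ hF2) du dv
  have dA := (k11.mul dc1).add (k12.mul dc2)
  have dB := (k21.mul dc1).add (k22.mul dc2)
  have total := ((dA.mul dc1).add (k1.mul dc2.neg)).add ((dB.mul dc2).add (k2.mul dc1))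
  exact hd_congr total (by unfold hh3; simp only [Pi.mul_apply, Pi.add_apply, Pi.neg_apply]; ring)

set_option maxHeartbeats 1000000 in
/-- if `F` satisfies, for all small `ε`, the magnetic-billiard
invariance relation `F(P + r(I-R_ε)n(P)) = F(P + r(I-R_{-ε})n(P))` with
`n = ∇F/|∇F|` at a point `P = (x,y)` where `∇F ≠ 0`, then the `ε³` Taylor
coefficient of the difference yields the stated third-order identity at `P`,
with `β = 1/r`. -/
theorem stmt_9 (F : ℝ → ℝ → ℝ) (hF : ContDiff ℝ (⊤ : ℕ∞) (Function.uncurry F))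
    (r β : ℝ) (hr : 0 < r) (hβ : β = 1 / r)
    (x y : ℝ)
    (hgrad : (pd1 F x y, pd2 F x y) ≠ (0, 0))
    (ε₀ : ℝ) (hε₀ : 0 < ε₀)
    (heq : ∀ ε : ℝ, |ε| < ε₀ →
      F (x + r * (pd1 F x y * (1 - Real.cos ε) + pd2 F x y * Real.sin ε) /
            Real.sqrt ((pd1 F x y)^2 + (pd2 F x y)^2))
        (y + r * (pd2 F x y * (1 - Real.cos ε) - pd1 F x y * Real.sin ε) /
            Real.sqrt ((pd1 F x y)^2 + (pd2 F x y)^2)) =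
      F (x + r * (pd1 F x y * (1 - Real.cos ε) - pd2 F x y * Real.sin ε) /
            Real.sqrt ((pd1 F x y)^2 + (pd2 F x y)^2))
        (y + r * (pd2 F x y * (1 - Real.cos ε) + pd1 F x y * Real.sin ε) /
            Real.sqrt ((pd1 F x y)^2 + (pd2 F x y)^2))) :
    (pd1 (pd1 (pd1 F)) x y * (pd2 F x y)^3
      - 3 * pd2 (pd1 (pd1 F)) x y * (pd2 F x y)^2 * pd1 F x y
      + 3 * pd2 (pd2 (pd1 F)) x y * pd2 F x y * (pd1 F x y)^2
      - pd2 (pd2 (pd2 F)) x y * (pd1 F x y)^3)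
    + 3 * β * Real.sqrt ((pd1 F x y)^2 + (pd2 F x y)^2) *
        (pd1 (pd1 F) x y * pd1 F x y * pd2 F x y
          + pd2 (pd1 F) x y * ((pd2 F x y)^2 - (pd1 F x y)^2)
          - pd2 (pd2 F) x y * pd1 F x y * pd2 F x y) = 0 := by
  subst hβ
  set a := pd1 F x y with ha
  set b := pd2 F x y with hb
  set s := Real.sqrt (a ^ 2 + b ^ 2) with hs
  have hr' : r ≠ 0 := ne_of_gt hr
  have hab : a ^ 2 + b ^ 2 ≠ 0 := by
    intro h
    have ha0 : a = 0 := by nlinarith [sq_nonneg a, sq_nonneg b]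
    have hb0 : b = 0 := by nlinarith [sq_nonneg a, sq_nonneg b]
    exact hgrad (by rw [ha0, hb0])
  have hs0 : 0 < s := Real.sqrt_pos.mpr (lt_of_le_of_ne (by positivity) (Ne.symm hab))
  have hs' : s ≠ 0 := ne_of_gt hs0
  have hev : ∀ ε, |ε| < ε₀ → hh F r s x y a b ε = hh F r s x y a b (-ε) := by
    intro ε hε
    have h2 := heq ε hε
    unfold hh uu vv
    rw [Real.cos_neg, Real.sin_neg, h2]
    ring_nf
  have hE : hh3 F r s x y a b 0 = 0 :=
    even_third _ _ _ _ (fun t => hasDerivAt_hh F hF r s x y a b t)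
      (fun t => hasDerivAt_hh1 F hF r s x y a b t)
      (fun t => hasDerivAt_hh2 F hF r s x y a b t) ε₀ hε₀ hev
  have hF1 := contDiff_pd1 F hF
  have hF2 := contDiff_pd2 F hF
  have final :
      (pd1 (pd1 (pd1 F)) x y * b ^ 3
        - 3 * pd2 (pd1 (pd1 F)) x y * b ^ 2 * a
        + 3 * pd2 (pd2 (pd1 F)) x y * b * a ^ 2
        - pd2 (pd2 (pd2 F)) x y * a ^ 3)
      + 3 * (1 / r) * s *
          (pd1 (pd1 F) x y * a * b
            + pd2 (pd1 F) x y * (b ^ 2 - a ^ 2)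
            - pd2 (pd2 F) x y * a * b) = s ^ 3 / r ^ 3 * hh3 F r s x y a b 0 := by
    unfold hh3 uu vv cc1 cc2
    simp only [Real.cos_zero, Real.sin_zero, mul_zero, mul_one, sub_self, zero_add, add_zero,
      zero_div, zero_sub, sub_zero, zero_mul]
    simp only [schwarz (pd2 F) hF2, schwarz F hF, schwarz (pd1 F) hF1]
    field_simp
    ring
  rw [final, hE, mul_zero]
end

section
/- Let F be a C³ function on an open set U ⊂ ℝ² with ∇F ≠ 0 on U, define H(F) = F_{xx}F_y² − 2F_{xy}F_xF_y + F_{yy}F_x², and let v = (F_y, −F_x) be the Hamiltonian (tangent) vector field of F. Then the directional derivative of the function H(F) + β|∇F|³ along v equals (F_{xxx}F_y³ − 3F_{xxy}F_y²F_x + 3F_{xyy}F_yF_x² − F_{yyy}F_x³) + 3β|∇F|(F_{xx}F_xF_y + F_{xy}(F_y² − F_x²) − F_{yy}F_xF_y). -/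
/-- The Hessian form `H(F) = F_xx F_y² - 2 F_xy F_x F_y + F_yy F_x²`. -/
noncomputable def Hess (F : ℝ → ℝ → ℝ) : ℝ → ℝ → ℝ := fun x y =>
  pd1 (pd1 F) x y * (pd2 F x y)^2 - 2 * pd2 (pd1 F) x y * pd1 F x y * pd2 F x y
    + pd2 (pd2 F) x y * (pd1 F x y)^2

open Function Filter Topology

lemma ContDiffOn.differentiableAt_of_isOpen {E F : Type*} [NormedAddCommGroup E]
    [NormedSpace ℝ E] [NormedAddCommGroup F] [NormedSpace ℝ F] {f : E → F} {s : Set E} {x : E}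
    {n : WithTop ℕ∞} (hs : IsOpen s) (hf : ContDiffOn ℝ n f s) (hn : n ≠ 0) (hx : x ∈ s) :
    DifferentiableAt ℝ f x :=
  (hf.differentiableOn hn).differentiableAt (hs.mem_nhds hx)

lemma fderiv_fderiv_apply_const {E F : Type*} [NormedAddCommGroup E] [NormedSpace ℝ E]
    [NormedAddCommGroup F] [NormedSpace ℝ F] {f : E → F} {x : E}
    (hf : DifferentiableAt ℝ (fderiv ℝ f) x) (v w : E) :
    fderiv ℝ (fun y => fderiv ℝ f y v) x w = fderiv ℝ (fderiv ℝ f) x w v := by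
  simp [fderiv_clm_apply hf (differentiableAt_const v)]

section PartialDerivatives

variable {f g : ℝ → ℝ → ℝ} {U : Set (ℝ × ℝ)} {x y : ℝ}

lemma hasDerivAt_pd1 (hf : DifferentiableAt ℝ (uncurry f) (x, y)) :
    HasDerivAt (fun t => f t y) (pd1 f x y) x :=
  (hf.comp x ((hasDerivAt_id' x).prodMk (hasDerivAt_const x y)).differentiableAt :).hasDerivAt

lemma hasDerivAt_pd2 (hf : DifferentiableAt ℝ (uncurry f) (x, y)) :
    HasDerivAt (fun t => f x t) (pd2 f x y) y :=
  (hf.comp y ((hasDerivAt_const y x).prodMk (hasDerivAt_id' y)).differentiableAt :).hasDerivAt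

lemma pd1_eq_fderiv (hf : DifferentiableAt ℝ (uncurry f) (x, y)) :
    pd1 f x y = fderiv ℝ (uncurry f) (x, y) (1, 0) :=
  (hf.hasFDerivAt.comp_hasDerivAt x ((hasDerivAt_id' x).prodMk (hasDerivAt_const x y)) :).deriv

lemma pd2_eq_fderiv (hf : DifferentiableAt ℝ (uncurry f) (x, y)) :
    pd2 f x y = fderiv ℝ (uncurry f) (x, y) (0, 1) :=
  (hf.hasFDerivAt.comp_hasDerivAt y ((hasDerivAt_const y x).prodMk (hasDerivAt_id' y)) :).deriv

lemma ContDiffOn.uncurry_pd1 {m n : WithTop ℕ∞} (hU : IsOpen U)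
    (hf : ContDiffOn ℝ m (uncurry f) U) (hmn : n + 1 ≤ m) :
    ContDiffOn ℝ n (uncurry (pd1 f)) U :=
  ((ContinuousLinearMap.apply ℝ ℝ ((1 : ℝ), (0 : ℝ))).contDiff.comp_contDiffOn
    (hf.fderiv_of_isOpen hU hmn)).congr fun _ hp =>
      pd1_eq_fderiv (hf.differentiableAt_of_isOpen hU (by rintro rfl; simp at hmn) hp)

lemma ContDiffOn.uncurry_pd2 {m n : WithTop ℕ∞} (hU : IsOpen U)
    (hf : ContDiffOn ℝ m (uncurry f) U) (hmn : n + 1 ≤ m) :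
    ContDiffOn ℝ n (uncurry (pd2 f)) U :=
  ((ContinuousLinearMap.apply ℝ ℝ ((0 : ℝ), (1 : ℝ))).contDiff.comp_contDiffOn
    (hf.fderiv_of_isOpen hU hmn)).congr fun _ hp =>
      pd2_eq_fderiv (hf.differentiableAt_of_isOpen hU (by rintro rfl; simp at hmn) hp)

lemma pd1_pd2_eq_pd2_pd1 (hU : IsOpen U) (hf : ContDiffOn ℝ 2 (uncurry f) U)
    (hp : (x, y) ∈ U) : pd1 (pd2 f) x y = pd2 (pd1 f) x y := by
  have hnhds := hU.mem_nhds hp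
  have hfd : DifferentiableAt ℝ (fderiv ℝ (uncurry f)) (x, y) :=
    (hf.fderiv_of_isOpen hU (m := 1) le_rfl).differentiableAt_of_isOpen hU one_ne_zero hp
  have hpd1 : uncurry (pd1 f) =ᶠ[𝓝 (x, y)] fun p => fderiv ℝ (uncurry f) p (1, 0) := by
    filter_upwards [hnhds] with p hp
    exact pd1_eq_fderiv (hf.differentiableAt_of_isOpen hU two_ne_zero hp)
  have hpd2 : uncurry (pd2 f) =ᶠ[𝓝 (x, y)] fun p => fderiv ℝ (uncurry f) p (0, 1) := by
    filter_upwards [hnhds] with p hp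
    exact pd2_eq_fderiv (hf.differentiableAt_of_isOpen hU two_ne_zero hp)
  rw [pd1_eq_fderiv ((hf.uncurry_pd2 hU le_rfl).differentiableAt_of_isOpen hU one_ne_zero hp),
    pd2_eq_fderiv ((hf.uncurry_pd1 hU le_rfl).differentiableAt_of_isOpen hU one_ne_zero hp),
    hpd1.fderiv_eq, hpd2.fderiv_eq, fderiv_fderiv_apply_const hfd, fderiv_fderiv_apply_const hfd]
  exact (hf.contDiffAt hnhds).isSymmSndFDerivAt (by simp) _ _

lemma pd2_congr (hU : IsOpen U) (hfg : Set.EqOn (uncurry f) (uncurry g) U) (hp : (x, y) ∈ U) :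
    pd2 f x y = pd2 g x y := by
  refine EventuallyEq.deriv_eq ?_
  filter_upwards [(continuous_const.prodMk continuous_id).continuousAt.preimage_mem_nhds
    (hU.mem_nhds hp)] with t ht using hfg ht

end PartialDerivatives

section SliceDerivatives

variable {q a b A B C : ℝ → ℝ} {q' a' b' A' B' C' t : ℝ}

lemma HasDerivAt.sqrt_pow_three (hq : HasDerivAt q q' t) (hq₀ : ∀ s, 0 ≤ q s) :
    HasDerivAt (fun s => √(q s) ^ 3) (3 / 2 * √(q t) * q') t := by
  have hrpow : (fun s => √(q s) ^ 3) = fun s => q s ^ (3 / 2 : ℝ) := by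
    funext s
    rw [Real.sqrt_eq_rpow, ← Real.rpow_natCast, ← Real.rpow_mul (hq₀ s)]
    norm_num
  rw [hrpow, Real.sqrt_eq_rpow]
  convert hq.rpow_const (p := 3 / 2) (Or.inr (by norm_num)) using 1
  norm_num
  ring

lemma HasDerivAt.hessForm_add_mul_sqrt_pow_three (β : ℝ) (ha : HasDerivAt a a' t)
    (hb : HasDerivAt b b' t) (hA : HasDerivAt A A' t) (hB : HasDerivAt B B' t)
    (hC : HasDerivAt C C' t) :
    HasDerivAt
      (fun s => A s * b s ^ 2 - 2 * B s * a s * b s + C s * a s ^ 2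
        + β * √(a s ^ 2 + b s ^ 2) ^ 3)
      (A' * b t ^ 2 + 2 * A t * b t * b' - 2 * (B' * a t * b t + B t * a' * b t + B t * a t * b')
        + (C' * a t ^ 2 + 2 * C t * a t * a')
        + 3 * β * √(a t ^ 2 + b t ^ 2) * (a t * a' + b t * b')) t := by
  have hnorm := ((ha.pow 2).add (hb.pow 2)).sqrt_pow_three fun s => by
    simp only [Pi.add_apply, Pi.pow_apply]; positivity
  refine ((((hA.mul (hb.pow 2)).sub (((hB.const_mul 2).mul ha).mul hb)).add
    (hC.mul (ha.pow 2))).add (hnorm.const_mul β)).congr_deriv ?_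
  simp only [Pi.pow_apply, Pi.add_apply, Pi.mul_apply]
  push_cast
  ring

end SliceDerivatives

theorem stmt_10_general (U : Set (ℝ × ℝ)) (hU : IsOpen U)
    (F : ℝ → ℝ → ℝ) (hF : ContDiffOn ℝ 3 (Function.uncurry F) U)
    (β : ℝ) :
    ∀ p ∈ U,
      pd2 F p.1 p.2 *
          pd1 (fun x y => Hess F x y + β * Real.sqrt ((pd1 F x y)^2 + (pd2 F x y)^2) ^ 3) p.1 p.2
        - pd1 F p.1 p.2 *
          pd2 (fun x y => Hess F x y + β * Real.sqrt ((pd1 F x y)^2 + (pd2 F x y)^2) ^ 3) p.1 p.2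
      = (pd1 (pd1 (pd1 F)) p.1 p.2 * (pd2 F p.1 p.2)^3
          - 3 * pd2 (pd1 (pd1 F)) p.1 p.2 * (pd2 F p.1 p.2)^2 * pd1 F p.1 p.2
          + 3 * pd2 (pd2 (pd1 F)) p.1 p.2 * pd2 F p.1 p.2 * (pd1 F p.1 p.2)^2
          - pd2 (pd2 (pd2 F)) p.1 p.2 * (pd1 F p.1 p.2)^3)
        + 3 * β * Real.sqrt ((pd1 F p.1 p.2)^2 + (pd2 F p.1 p.2)^2) *
            (pd1 (pd1 F) p.1 p.2 * pd1 F p.1 p.2 * pd2 F p.1 p.2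
              + pd2 (pd1 F) p.1 p.2 * ((pd2 F p.1 p.2)^2 - (pd1 F p.1 p.2)^2)
              - pd2 (pd2 F) p.1 p.2 * pd1 F p.1 p.2 * pd2 F p.1 p.2) := by
  rintro ⟨x, y⟩ hp
  set Φ : ℝ → ℝ → ℝ := fun x y => Hess F x y + β * √(pd1 F x y ^ 2 + pd2 F x y ^ 2) ^ 3
  have hF1 : ContDiffOn ℝ 2 (uncurry (pd1 F)) U := hF.uncurry_pd1 hU le_rfl
  have hF2 : ContDiffOn ℝ 2 (uncurry (pd2 F)) U := hF.uncurry_pd2 hU le_rfl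
  have hF11 : ContDiffOn ℝ 1 (uncurry (pd1 (pd1 F))) U := hF1.uncurry_pd1 hU le_rfl
  have hF12 : ContDiffOn ℝ 1 (uncurry (pd2 (pd1 F))) U := hF1.uncurry_pd2 hU le_rfl
  have hF22 : ContDiffOn ℝ 1 (uncurry (pd2 (pd2 F))) U := hF2.uncurry_pd2 hU le_rfl
  have hd : ∀ {g : ℝ → ℝ → ℝ} {n : WithTop ℕ∞}, ContDiffOn ℝ n (uncurry g) U → n ≠ 0 →
      DifferentiableAt ℝ (uncurry g) (x, y) := fun hg hn => hg.differentiableAt_of_isOpen hU hn hp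
  have hx : HasDerivAt (fun t => Φ t y) _ x :=
    (hasDerivAt_pd1 (hd hF1 two_ne_zero)).hessForm_add_mul_sqrt_pow_three β
      (hasDerivAt_pd1 (hd hF2 two_ne_zero)) (hasDerivAt_pd1 (hd hF11 one_ne_zero))
      (hasDerivAt_pd1 (hd hF12 one_ne_zero)) (hasDerivAt_pd1 (hd hF22 one_ne_zero))
  have hy : HasDerivAt (fun t => Φ x t) _ y :=
    (hasDerivAt_pd2 (hd hF1 two_ne_zero)).hessForm_add_mul_sqrt_pow_three β
      (hasDerivAt_pd2 (hd hF2 two_ne_zero)) (hasDerivAt_pd2 (hd hF11 one_ne_zero))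
      (hasDerivAt_pd2 (hd hF12 one_ne_zero)) (hasDerivAt_pd2 (hd hF22 one_ne_zero))
  have hF₂ : ContDiffOn ℝ 2 (uncurry F) U := hF.of_le (by norm_num)
  have h12 : pd1 (pd2 F) x y = pd2 (pd1 F) x y := pd1_pd2_eq_pd2_pd1 hU hF₂ hp
  have h112 : pd1 (pd2 (pd1 F)) x y = pd2 (pd1 (pd1 F)) x y := pd1_pd2_eq_pd2_pd1 hU hF1 hp
  have h122 : pd1 (pd2 (pd2 F)) x y = pd2 (pd2 (pd1 F)) x y :=
    (pd1_pd2_eq_pd2_pd1 hU hF2 hp).trans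
      (pd2_congr hU (fun q hq => pd1_pd2_eq_pd2_pd1 hU hF₂ hq) hp)
  rw [show pd1 Φ x y = _ from hx.deriv, show pd2 Φ x y = _ from hy.deriv, h12, h112, h122]
  ring

/-- the derivative of `H(F) + β|∇F|³` along the Hamiltonian vector
field `v = (F_y, -F_x)` equals the third-order expression appearing as the `ε³`
coefficient of the billiard invariance relation. -/
theorem stmt_10 (U : Set (ℝ × ℝ)) (hU : IsOpen U)
    (F : ℝ → ℝ → ℝ) (hF : ContDiffOn ℝ 3 (Function.uncurry F) U)
    (hgrad : ∀ p ∈ U, (pd1 F p.1 p.2, pd2 F p.1 p.2) ≠ (0, 0))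
    (β : ℝ) :
    ∀ p ∈ U,
      pd2 F p.1 p.2 *
          pd1 (fun x y => Hess F x y + β * Real.sqrt ((pd1 F x y)^2 + (pd2 F x y)^2) ^ 3) p.1 p.2
        - pd1 F p.1 p.2 *
          pd2 (fun x y => Hess F x y + β * Real.sqrt ((pd1 F x y)^2 + (pd2 F x y)^2) ^ 3) p.1 p.2
      = (pd1 (pd1 (pd1 F)) p.1 p.2 * (pd2 F p.1 p.2)^3
          - 3 * pd2 (pd1 (pd1 F)) p.1 p.2 * (pd2 F p.1 p.2)^2 * pd1 F p.1 p.2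
          + 3 * pd2 (pd2 (pd1 F)) p.1 p.2 * pd2 F p.1 p.2 * (pd1 F p.1 p.2)^2
          - pd2 (pd2 (pd2 F)) p.1 p.2 * (pd1 F p.1 p.2)^3)
        + 3 * β * Real.sqrt ((pd1 F p.1 p.2)^2 + (pd2 F p.1 p.2)^2) *
            (pd1 (pd1 F) p.1 p.2 * pd1 F p.1 p.2 * pd2 F p.1 p.2
              + pd2 (pd1 F) p.1 p.2 * ((pd2 F p.1 p.2)^2 - (pd1 F p.1 p.2)^2)
              - pd2 (pd2 F) p.1 p.2 * pd1 F p.1 p.2 * pd2 F p.1 p.2) :=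
  stmt_10_general U hU F hF β
end

section
/- Let f̃ be a homogeneous polynomial over ℂ of degree d and Z = (x₀:y₀:0) a point on {f̃ = 0} ∩ {z = 0} with x₀² + y₀² ≠ 0. If (f̃_x)²(Z) + (f̃_y)²(Z) = 0, then either Z is a singular point of {f̃ = 0}, or the projective curve {f̃ = 0} is tangent to the line {z = 0} at Z. -/
/-!
Euler's relation `x f_x + y f_y + z f_z = d f` at `Z = (x₀ : y₀ : 0)`, where `f` and `z` vanish,
gives `x₀ f_x + y₀ f_y = 0`. Together with `f_x² + f_y² = 0` this forces
`(x₀² + y₀²) f_x² = 0`, so `f_x = f_y = 0` at `Z`; the two alternatives are then the two cases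
`f_z(Z) = 0` and `f_z(Z) ≠ 0`.
-/

open MvPolynomial

theorem MvPolynomial.IsHomogeneous.sum_mul_eval_pderiv {σ R : Type*} [Fintype σ] [CommRing R]
    {f : MvPolynomial σ R} {n : ℕ} (hf : f.IsHomogeneous n) (v : σ → R) :
    ∑ i, v i * eval v (pderiv i f) = n * eval v f := by
  simpa [nsmul_eq_mul] using congrArg (eval v) hf.sum_X_mul_pderiv

theorem eq_zero_and_eq_zero_of_sq_add_sq_eq_zero_of_mul_add_mul_eq_zero {R : Type*} [CommRing R] [IsDomain R]
    {a b x y : R} (hxy : x ^ 2 + y ^ 2 ≠ 0) (hab : a ^ 2 + b ^ 2 = 0) (h : x * a + y * b = 0) :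
    a = 0 ∧ b = 0 := by
  have ha : (x ^ 2 + y ^ 2) * a ^ 2 = 0 := by
    linear_combination (x * a - y * b) * h + y ^ 2 * hab
  have ha : a = 0 := pow_eq_zero_iff two_ne_zero |>.mp ((mul_eq_zero.mp ha).resolve_left hxy)
  refine ⟨ha, pow_eq_zero_iff two_ne_zero |>.mp ?_⟩
  simpa [ha] using hab

/-- let `f̃` be homogeneous of degree `d` over `ℂ` and
`Z = (x₀:y₀:0)` a point of `{f̃ = 0} ∩ {z = 0}` with `x₀² + y₀² ≠ 0`.  If
`(f̃_x)²(Z) + (f̃_y)²(Z) = 0`, then either `Z` is a singular point of `{f̃ = 0}`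
(all three partials vanish), or the curve is tangent to the line `{z = 0}` at `Z`
(the gradient is proportional to `(0,0,1)`, i.e. `f̃_x = f̃_y = 0 ≠ f̃_z` at `Z`). -/
theorem stmt_15 (d : ℕ) (f : MvPolynomial (Fin 3) ℂ)
    (hhom : f.IsHomogeneous d) (x₀ y₀ : ℂ)
    (hZ : MvPolynomial.eval ![x₀, y₀, 0] f = 0)
    (hiso : x₀^2 + y₀^2 ≠ 0)
    (h1 : (MvPolynomial.eval ![x₀, y₀, 0] (MvPolynomial.pderiv 0 f))^2
        + (MvPolynomial.eval ![x₀, y₀, 0] (MvPolynomial.pderiv 1 f))^2 = 0) :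
    (MvPolynomial.eval ![x₀, y₀, 0] (MvPolynomial.pderiv 0 f) = 0 ∧
     MvPolynomial.eval ![x₀, y₀, 0] (MvPolynomial.pderiv 1 f) = 0 ∧
     MvPolynomial.eval ![x₀, y₀, 0] (MvPolynomial.pderiv 2 f) = 0) ∨
    (MvPolynomial.eval ![x₀, y₀, 0] (MvPolynomial.pderiv 0 f) = 0 ∧
     MvPolynomial.eval ![x₀, y₀, 0] (MvPolynomial.pderiv 1 f) = 0 ∧
     MvPolynomial.eval ![x₀, y₀, 0] (MvPolynomial.pderiv 2 f) ≠ 0) := by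
  have heuler : x₀ * eval ![x₀, y₀, 0] (pderiv 0 f) + y₀ * eval ![x₀, y₀, 0] (pderiv 1 f) = 0 := by
    simpa [Fin.sum_univ_three, hZ] using hhom.sum_mul_eval_pderiv ![x₀, y₀, 0]
  obtain ⟨hfx, hfy⟩ := eq_zero_and_eq_zero_of_sq_add_sq_eq_zero_of_mul_add_mul_eq_zero hiso h1 heuler
  exact (eq_or_ne (eval ![x₀, y₀, 0] (pderiv 2 f)) 0).imp
    (fun hfz => ⟨hfx, hfy, hfz⟩) (fun hfz => ⟨hfx, hfy, hfz⟩)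
end
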